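/- Let n ≥ 2 and λ ∈ ℝ^n with λ_1 ≥ ... ≥ λ_n, λ_i > 0 for 1 ≤ i ≤ n-1, λ_n < 0, σ_{n-1}(λ) ≥ 0 and σ_n(λ) < 0. Then for any real numbers a_1, ..., a_{n-1}, setting a_n = -(a_1 + ... + a_{n-1}), one has Σ_{i=1}^{n-1} λ_i |a_i|² + λ_n |Σ_{i=1}^{n-1} a_i|² ≥ 0. -/

import Mathlib

/-!
Since `σ_n(λ) = ∏ λ_i < 0` and `σ_{n-1}(λ) = σ_n(λ) · ∑ λ_i⁻¹ ≥ 0`, we get `∑ λ_i⁻¹ ≤ 0`,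
i.e. `1 + λ_n ∑_{i<n} λ_i⁻¹ ≥ 0`. Weighted Cauchy–Schwarz gives
`(∑_{i<n} a_i)² ≤ (∑_{i<n} λ_i a_i²)(∑_{i<n} λ_i⁻¹)`, so, as `λ_n < 0`, the quadratic form
is at least `(∑_{i<n} λ_i a_i²)(1 + λ_n ∑_{i<n} λ_i⁻¹) ≥ 0`.
-/

open Real Finset

/-- The `k`-th elementary symmetric polynomial of `x : Fin n → ℝ`. -/
def esymm (n k : ℕ) (x : Fin n → ℝ) : ℝ :=
  ∑ s ∈ (Finset.univ : Finset (Fin n)).powersetCard k, ∏ i ∈ s, x i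

namespace Finset

theorem powersetCard_card_sub_one_eq_image_erase {α : Type*} [DecidableEq α] {s : Finset α}
    (hs : s.Nonempty) : s.powersetCard (#s - 1) = s.image s.erase := by
  ext t
  simp only [mem_powersetCard, mem_image]
  constructor
  · rintro ⟨hts, hcard⟩
    have : #(s \ t) = 1 := by
      rw [card_sdiff_of_subset hts, hcard]
      have := hs.card_pos
      omega
    obtain ⟨a, ha⟩ := card_eq_one.1 this
    have has : a ∈ s := (mem_sdiff.1 (ha ▸ mem_singleton_self a)).1
    exact ⟨a, has, by rw [erase_eq, ← ha, sdiff_sdiff_eq_self hts]⟩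
  · rintro ⟨a, ha, rfl⟩
    exact ⟨erase_subset a s, card_erase_of_mem ha⟩

theorem sq_sum_le_sum_mul_sq_mul_sum_inv {ι : Type*} (s : Finset ι) (w a : ι → ℝ)
    (hw : ∀ i ∈ s, 0 < w i) :
    (∑ i ∈ s, a i) ^ 2 ≤ (∑ i ∈ s, w i * a i ^ 2) * ∑ i ∈ s, (w i)⁻¹ :=
  sum_sq_le_sum_mul_sum_of_sq_le_mul s
    (fun i hi => mul_nonneg (hw i hi).le (sq_nonneg _)) (fun i hi => (inv_pos.2 (hw i hi)).le)
    (fun i hi => by rw [mul_right_comm, mul_inv_cancel₀ (hw i hi).ne', one_mul])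

end Finset

theorem esymm_self (n : ℕ) (x : Fin n → ℝ) : esymm n n x = ∏ i, x i := by
  simpa [esymm] using
    congrArg (∑ s ∈ ·, ∏ i ∈ s, x i) (powersetCard_self (univ : Finset (Fin n)))

theorem esymm_sub_one (n : ℕ) (hn : 0 < n) (x : Fin n → ℝ) (hx : ∀ i, x i ≠ 0) :
    esymm n (n - 1) x = (∏ i, x i) * ∑ i, (x i)⁻¹ := by
  have h := powersetCard_card_sub_one_eq_image_erase (s := (univ : Finset (Fin n)))
    ⟨⟨0, hn⟩, mem_univ _⟩
  rw [card_univ, Fintype.card_fin] at h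
  rw [esymm, h, sum_image (univ.erase_injOn.mono (by simp)), mul_sum]
  refine sum_congr rfl fun i _ => ?_
  rw [eq_mul_inv_iff_mul_eq₀ (hx i), prod_erase_mul _ _ (mem_univ i)]

theorem sum_inv_nonpos_of_esymm (n : ℕ) (x : Fin n → ℝ) (hσn1 : 0 ≤ esymm n (n - 1) x)
    (hσn : esymm n n x < 0) : ∑ i, (x i)⁻¹ ≤ 0 := by
  rw [esymm_self] at hσn
  have hx : ∀ i, x i ≠ 0 := fun i => prod_ne_zero_iff.1 hσn.ne i (mem_univ i)
  have hn : 0 < n := Nat.pos_of_ne_zero fun h => by subst h; norm_num at hσn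
  rw [esymm_sub_one n hn x hx] at hσn1
  exact nonpos_of_mul_nonneg_right hσn1 hσn

theorem sum_mul_sq_add_mul_sq_sum_nonneg {ι : Type*} (s : Finset ι) (w a : ι → ℝ) (μ : ℝ)
    (hw : ∀ i ∈ s, 0 < w i) (hμ : μ < 0) (hinv : ∑ i ∈ s, (w i)⁻¹ + μ⁻¹ ≤ 0) :
    0 ≤ ∑ i ∈ s, w i * a i ^ 2 + μ * (∑ i ∈ s, a i) ^ 2 := by
  set Q := ∑ i ∈ s, w i * a i ^ 2
  set T := ∑ i ∈ s, (w i)⁻¹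
  have hQ : 0 ≤ Q := sum_nonneg fun i hi => mul_nonneg (hw i hi).le (sq_nonneg _)
  have hkey : 0 ≤ 1 + μ * T := by
    have := mul_le_mul_of_nonpos_left hinv hμ.le
    rw [mul_add, mul_inv_cancel₀ hμ.ne, mul_zero] at this
    linarith
  calc 0 ≤ Q * (1 + μ * T) := mul_nonneg hQ hkey
    _ = Q + μ * (Q * T) := by ring
    _ ≤ Q + μ * (∑ i ∈ s, a i) ^ 2 :=
        add_le_add le_rfl
          (mul_le_mul_of_nonpos_left (sq_sum_le_sum_mul_sq_mul_sum_inv s w a hw) hμ.le)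

theorem stmt_4 (n : ℕ) (hn : 2 ≤ n) (lam : Fin n → ℝ)
    (hpos : ∀ i : Fin n, (i : ℕ) < n - 1 → 0 < lam i)
    (hneg : lam ⟨n - 1, by omega⟩ < 0)
    (hσn1 : 0 ≤ esymm n (n - 1) lam)
    (hσn : esymm n n lam < 0)
    (a : Fin n → ℝ) :
    0 ≤ (∑ i ∈ Finset.univ.filter (fun i : Fin n => (i : ℕ) < n - 1), lam i * (a i) ^ 2)
        + lam ⟨n - 1, by omega⟩ *
          (∑ i ∈ Finset.univ.filter (fun i : Fin n => (i : ℕ) < n - 1), a i) ^ 2 := by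
  set last : Fin n := ⟨n - 1, by omega⟩
  have hfilter : univ.filter (fun i : Fin n => (i : ℕ) < n - 1) = univ.erase last := by
    ext i
    simp only [mem_filter, mem_univ, true_and, mem_erase, ne_eq, and_true, last, Fin.ext_iff]
    omega
  have hinv := sum_inv_nonpos_of_esymm n lam hσn1 hσn
  rw [← sum_erase_add _ _ (mem_univ last), ← hfilter] at hinv
  exact sum_mul_sq_add_mul_sq_sum_nonneg _ lam a _
    (fun i hi => hpos i (mem_filter.1 hi).2) hneg hinv
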